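/- arXiv:1610.09701 — 5 statements merged into one kernel-verified Lean document; each statement's English description precedes it below -/
import Mathlib

section
/- Let 0 < α ≤ 1 and let f : ℝ² → ℝ have finite norm ‖f‖_{C̊^{0,α}}. Then both of the following two-sided inequalities hold: (1/2)·‖f‖_{C̊^{0,α}} ≤ sup_x |f(x)| + sup_{x ≠ x'} min{|x|^α, |x'|^α} · |f(x) − f(x')| / |x − x'|^α ≤ 2·‖f‖_{C̊^{0,α}}, and (1/2)·‖f‖_{C̊^{0,α}} ≤ sup_x |f(x)| + sup_{x ≠ x'} max{|x|^α, |x'|^α} · |f(x) − f(x')| / |x − x'|^α ≤ 2·‖f‖_{C̊^{0,α}}. -/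
open Real MeasureTheory
open scoped ENNReal

noncomputable section

/-- The sup-norm `sup_x |f x|` of a function on `ℝ²`, valued in `ℝ≥0∞`. -/
def supNorm (f : EuclideanSpace ℝ (Fin 2) → ℝ) : ℝ≥0∞ :=
  ⨆ x : EuclideanSpace ℝ (Fin 2), (‖f x‖₊ : ℝ≥0∞)

/-- The scale-invariant weighted Hölder seminorm
`sup_{x ≠ x'} | |x|^α f(x) − |x'|^α f(x') | / |x − x'|^α`. -/
def ringSemi (α : ℝ) (f : EuclideanSpace ℝ (Fin 2) → ℝ) : ℝ≥0∞ :=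
  ⨆ (x : EuclideanSpace ℝ (Fin 2)) (x' : EuclideanSpace ℝ (Fin 2)) (_ : x ≠ x'),
    (‖(‖x‖ ^ α) * f x - (‖x'‖ ^ α) * f x'‖₊ : ℝ≥0∞) / ENNReal.ofReal (‖x - x'‖ ^ α)

/-- The norm `‖f‖_{C̊^{0,α}} = sup |f| + sup_{x ≠ x'} | |x|^α f(x) − |x'|^α f(x') |/|x−x'|^α`. -/
def ringNorm (α : ℝ) (f : EuclideanSpace ℝ (Fin 2) → ℝ) : ℝ≥0∞ :=
  supNorm f + ringSemi α f

/-- `sup_{x ≠ x'} min(|x|^α, |x'|^α)·|f(x) − f(x')| / |x − x'|^α`. -/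
def minSemi (α : ℝ) (f : EuclideanSpace ℝ (Fin 2) → ℝ) : ℝ≥0∞ :=
  ⨆ (x : EuclideanSpace ℝ (Fin 2)) (x' : EuclideanSpace ℝ (Fin 2)) (_ : x ≠ x'),
    ENNReal.ofReal (min (‖x‖ ^ α) (‖x'‖ ^ α)) * (‖f x - f x'‖₊ : ℝ≥0∞) /
      ENNReal.ofReal (‖x - x'‖ ^ α)

/-- `sup_{x ≠ x'} max(|x|^α, |x'|^α)·|f(x) − f(x')| / |x − x'|^α`. -/
def maxSemi (α : ℝ) (f : EuclideanSpace ℝ (Fin 2) → ℝ) : ℝ≥0∞ :=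
  ⨆ (x : EuclideanSpace ℝ (Fin 2)) (x' : EuclideanSpace ℝ (Fin 2)) (_ : x ≠ x'),
    ENNReal.ofReal (max (‖x‖ ^ α) (‖x'‖ ^ α)) * (‖f x - f x'‖₊ : ℝ≥0∞) /
      ENNReal.ofReal (‖x - x'‖ ^ α)

/-! Write `a = ‖x‖ ^ α` and `b = ‖x'‖ ^ α`. For `α ≤ 1` the map `t ↦ t ^ α` is `α`-Hölder with
constant one, so `|a - b| ≤ ‖x - x'‖ ^ α`. If `a ≤ b`, the identities
`a f x - b f x' = a (f x - f x') + (a - b) f x'` and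
`b (f x - f x') = (a f x - b f x') + (b - a) f x` bound each weighted difference quotient by
the other one plus `sup |f|`. Together with `min ≤ max` this gives
`ringSemi ≤ sup |f| + minSemi ≤ sup |f| + maxSemi ≤ 2 sup |f| + ringSemi`. -/

theorem Real.abs_rpow_sub_rpow_le {a b p : ℝ} (ha : 0 ≤ a) (hb : 0 ≤ b) (hp0 : 0 ≤ p)
    (hp1 : p ≤ 1) : |a ^ p - b ^ p| ≤ |a - b| ^ p := by
  wlog hba : b ≤ a generalizing a b
  · rw [abs_sub_comm, abs_sub_comm a]
    exact this hb ha (le_of_not_ge hba)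
  have hsub : a ^ p ≤ b ^ p + (a - b) ^ p := by
    simpa using Real.rpow_add_le_add_rpow hb (sub_nonneg.2 hba) hp0 hp1
  rw [abs_of_nonneg (sub_nonneg.2 (Real.rpow_le_rpow hb hba hp0)), abs_of_nonneg (sub_nonneg.2 hba)]
  linarith

theorem abs_norm_rpow_sub_norm_rpow_le {E : Type*} [SeminormedAddCommGroup E] {p : ℝ}
    (hp0 : 0 ≤ p) (hp1 : p ≤ 1) (x y : E) : |‖x‖ ^ p - ‖y‖ ^ p| ≤ ‖x - y‖ ^ p :=
  (Real.abs_rpow_sub_rpow_le (norm_nonneg x) (norm_nonneg y) hp0 hp1).trans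
    (Real.rpow_le_rpow (abs_nonneg _) (abs_norm_sub_norm_le x y) hp0)

theorem abs_mul_sub_mul_le_min_mul_add {a b u v d : ℝ} (ha : 0 ≤ a) (hb : 0 ≤ b)
    (hab : |a - b| ≤ d) : |a * u - b * v| ≤ min a b * |u - v| + d * max |u| |v| := by
  have hd : 0 ≤ d := (abs_nonneg _).trans hab
  wlog h : a ≤ b generalizing a b u v
  · have := this (u := v) (v := u) hb ha (by rwa [abs_sub_comm]) (le_of_not_ge h)
    rwa [abs_sub_comm, min_comm, abs_sub_comm v, max_comm] at this
  calc |a * u - b * v| = |a * (u - v) + (a - b) * v| := by ring_nf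
    _ ≤ |a * (u - v)| + |(a - b) * v| := abs_add_le _ _
    _ ≤ min a b * |u - v| + d * max |u| |v| := by
      rw [abs_mul, abs_mul, abs_of_nonneg ha, min_eq_left h]
      gcongr
      exact le_max_right _ _

theorem max_mul_le_abs_mul_sub_mul_add {a b u v d : ℝ} (ha : 0 ≤ a) (hb : 0 ≤ b)
    (hab : |a - b| ≤ d) : max a b * |u - v| ≤ |a * u - b * v| + d * max |u| |v| := by
  have hd : 0 ≤ d := (abs_nonneg _).trans hab
  wlog h : a ≤ b generalizing a b u v
  · have := this (u := v) (v := u) hb ha (by rwa [abs_sub_comm]) (le_of_not_ge h)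
    rwa [max_comm b, abs_sub_comm v, abs_sub_comm (b * v), max_comm |v|] at this
  calc max a b * |u - v| = |b * (u - v)| := by rw [max_eq_right h, abs_mul, abs_of_nonneg hb]
    _ = |(a * u - b * v) + (b - a) * u| := by ring_nf
    _ ≤ |a * u - b * v| + |(b - a) * u| := abs_add_le _ _
    _ ≤ |a * u - b * v| + d * max |u| |v| := by
      rw [abs_mul, abs_sub_comm b a]
      gcongr
      exact le_max_left _ _

theorem ENNReal.ofReal_div_le_ofReal_div_add {p q d s : ℝ} (hq : 0 ≤ q) (hd : 0 < d)
    (hs : 0 ≤ s) (h : p ≤ q + d * s) :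
    ENNReal.ofReal p / ENNReal.ofReal d ≤
      ENNReal.ofReal q / ENNReal.ofReal d + ENNReal.ofReal s := by
  rw [← ENNReal.ofReal_div_of_pos hd, ← ENNReal.ofReal_div_of_pos hd,
    ← ENNReal.ofReal_add (div_nonneg hq hd.le) hs]
  refine ENNReal.ofReal_le_ofReal ?_
  rw [div_add' _ _ _ hd.ne', div_le_div_iff_of_pos_right hd]
  linarith

theorem ofReal_max_abs_le_supNorm (f : EuclideanSpace ℝ (Fin 2) → ℝ)
    (x y : EuclideanSpace ℝ (Fin 2)) :
    ENNReal.ofReal (max |f x| |f y|) ≤ supNorm f := by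
  rw [ENNReal.ofReal_max, ← Real.norm_eq_abs, ← Real.norm_eq_abs, ofReal_norm, ofReal_norm]
  exact max_le (le_iSup (fun z ↦ ‖f z‖ₑ) x) (le_iSup (fun z ↦ ‖f z‖ₑ) y)

section

variable {α : ℝ} (hα0 : 0 ≤ α) (hα1 : α ≤ 1) (f : EuclideanSpace ℝ (Fin 2) → ℝ)
include hα0 hα1

theorem ringSemi_le_supNorm_add_minSemi : ringSemi α f ≤ supNorm f + minSemi α f := by
  refine iSup₂_le fun x x' ↦ iSup_le fun hne ↦ ?_
  have hmin : 0 ≤ min (‖x‖ ^ α) (‖x'‖ ^ α) := by positivity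
  have key := abs_mul_sub_mul_le_min_mul_add (u := f x) (v := f x') (by positivity)
    (by positivity) (abs_norm_rpow_sub_norm_rpow_le hα0 hα1 x x')
  calc (‖‖x‖ ^ α * f x - ‖x'‖ ^ α * f x'‖₊ : ℝ≥0∞) / ENNReal.ofReal (‖x - x'‖ ^ α)
      ≤ ENNReal.ofReal (min (‖x‖ ^ α) (‖x'‖ ^ α) * |f x - f x'|) / ENNReal.ofReal (‖x - x'‖ ^ α)
          + ENNReal.ofReal (max |f x| |f x'|) := by
        rw [← enorm_eq_nnnorm, ← ofReal_norm, Real.norm_eq_abs]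
        exact ENNReal.ofReal_div_le_ofReal_div_add (by positivity)
          (Real.rpow_pos_of_pos (norm_sub_pos_iff.2 hne) α) (by positivity) key
    _ ≤ minSemi α f + supNorm f := by
        refine add_le_add (le_iSup₂_of_le x x' (le_iSup_of_le hne (le_of_eq ?_)))
          (ofReal_max_abs_le_supNorm f x x')
        rw [ENNReal.ofReal_mul hmin, ← Real.norm_eq_abs, ofReal_norm, enorm_eq_nnnorm]
    _ = supNorm f + minSemi α f := add_comm _ _

theorem maxSemi_le_supNorm_add_ringSemi : maxSemi α f ≤ supNorm f + ringSemi α f := by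
  refine iSup₂_le fun x x' ↦ iSup_le fun hne ↦ ?_
  have hmax : 0 ≤ max (‖x‖ ^ α) (‖x'‖ ^ α) := by positivity
  have key := max_mul_le_abs_mul_sub_mul_add (u := f x) (v := f x') (by positivity)
    (by positivity) (abs_norm_rpow_sub_norm_rpow_le hα0 hα1 x x')
  calc ENNReal.ofReal (max (‖x‖ ^ α) (‖x'‖ ^ α)) * (‖f x - f x'‖₊ : ℝ≥0∞) /
        ENNReal.ofReal (‖x - x'‖ ^ α)
      ≤ ENNReal.ofReal |‖x‖ ^ α * f x - ‖x'‖ ^ α * f x'| / ENNReal.ofReal (‖x - x'‖ ^ α)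
          + ENNReal.ofReal (max |f x| |f x'|) := by
        rw [← enorm_eq_nnnorm, ← ofReal_norm, Real.norm_eq_abs, ← ENNReal.ofReal_mul hmax]
        exact ENNReal.ofReal_div_le_ofReal_div_add (by positivity)
          (Real.rpow_pos_of_pos (norm_sub_pos_iff.2 hne) α) (by positivity) key
    _ ≤ ringSemi α f + supNorm f := by
        refine add_le_add (le_iSup₂_of_le x x' (le_iSup_of_le hne (le_of_eq ?_)))
          (ofReal_max_abs_le_supNorm f x x')
        rw [← Real.norm_eq_abs, ofReal_norm, enorm_eq_nnnorm]
    _ = supNorm f + ringSemi α f := add_comm _ _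

end

theorem minSemi_le_maxSemi (α : ℝ) (f : EuclideanSpace ℝ (Fin 2) → ℝ) :
    minSemi α f ≤ maxSemi α f :=
  iSup₂_mono fun _ _ ↦ iSup_mono fun _ ↦ by gcongr; exact min_le_max

theorem ringNorm_equiv_general (α : ℝ) (hα0 : 0 < α) (hα1 : α ≤ 1)
    (f : EuclideanSpace ℝ (Fin 2) → ℝ) :
    (ringNorm α f) / 2 ≤ supNorm f + minSemi α f ∧
      supNorm f + minSemi α f ≤ 2 * ringNorm α f ∧
    (ringNorm α f) / 2 ≤ supNorm f + maxSemi α f ∧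
      supNorm f + maxSemi α f ≤ 2 * ringNorm α f := by
  have hRm := ringSemi_le_supNorm_add_minSemi hα0.le hα1 f
  have hMR := maxSemi_le_supNorm_add_ringSemi hα0.le hα1 f
  have hmM : supNorm f + minSemi α f ≤ supNorm f + maxSemi α f := by
    gcongr; exact minSemi_le_maxSemi α f
  have lower : ringNorm α f / 2 ≤ supNorm f + minSemi α f := by
    refine ENNReal.div_le_of_le_mul ?_
    calc ringNorm α f ≤ supNorm f + (supNorm f + minSemi α f) := by
          unfold ringNorm; gcongr
      _ ≤ (supNorm f + minSemi α f) * 2 := by rw [mul_two]; gcongr; exact le_self_add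
  have upper : supNorm f + maxSemi α f ≤ 2 * ringNorm α f := by
    calc supNorm f + maxSemi α f ≤ supNorm f + ringNorm α f := by unfold ringNorm; gcongr
      _ ≤ 2 * ringNorm α f := by rw [two_mul]; gcongr; exact le_self_add
  exact ⟨lower, hmM.trans upper, lower.trans hmM, upper⟩

/-- Equivalence of the `C̊^{0,α}` norm with the min- and max-weighted versions. -/
theorem ringNorm_equiv (α : ℝ) (hα0 : 0 < α) (hα1 : α ≤ 1)
    (f : EuclideanSpace ℝ (Fin 2) → ℝ) (hf : ringNorm α f ≠ ⊤) :
    (ringNorm α f) / 2 ≤ supNorm f + minSemi α f ∧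
      supNorm f + minSemi α f ≤ 2 * ringNorm α f ∧
    (ringNorm α f) / 2 ≤ supNorm f + maxSemi α f ∧
      supNorm f + maxSemi α f ≤ 2 * ringNorm α f :=
  ringNorm_equiv_general α hα0 hα1 f
end
end

section
/- Let m ≥ 3 be an integer. There exists a constant C_m > 0 such that for all x, y ∈ ℝ² with y ≠ 0 and |y| ≥ 2|x|, the m-fold symmetrized Biot–Savart kernel K^{(m)}(x,y) := (1/m) Σ_{i=1}^{m} K(x − O_{2πi/m} y) satisfies |K^{(m)}(x,y)| ≤ C_m · |x|^{m−1} / |y|^m. -/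
/-!
Identify `ℝ²` with `ℂ`. Then `K(z) = i · conj (1 / (2π z))` and the rotation `O_β` is
multiplication by `e^{iβ}`, so with `ζ = e^{2πi/m}`, `X = x`, `Y = y` viewed as complex numbers,
`|K^{(m)}(x,y)| = (2πm)⁻¹ |∑_{i=1}^{m} (X - ζ^i Y)⁻¹|`. Since `X^m - Y^m = ∏_{i=1}^{m} (X - ζ^i Y)`, that
sum is the logarithmic derivative `m X^{m-1} / (X^m - Y^m)`, and `|X^m - Y^m| ≥ |Y|^m / 2` when
`|Y| ≥ 2|X|`. This gives the bound with `C_m = 1/π`.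
-/

open Real
open scoped BigOperators

noncomputable section

/-- The point of `ℝ²` with coordinates `(a, b)`. -/
def mk2 (a b : ℝ) : EuclideanSpace ℝ (Fin 2) := (WithLp.equiv 2 (Fin 2 → ℝ)).symm ![a, b]

/-- Counterclockwise rotation of `ℝ²` by the angle `β`. -/
def rot (β : ℝ) (y : EuclideanSpace ℝ (Fin 2)) : EuclideanSpace ℝ (Fin 2) :=
  mk2 (Real.cos β * y 0 - Real.sin β * y 1) (Real.sin β * y 0 + Real.cos β * y 1)

/-- The 2D Biot–Savart kernel `K(z) = (1/2π) z^⊥ / |z|²`. -/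
def BSKernel (z : EuclideanSpace ℝ (Fin 2)) : EuclideanSpace ℝ (Fin 2) :=
  (2 * Real.pi * ‖z‖ ^ 2)⁻¹ • mk2 (-(z 1)) (z 0)

/-- The `m`-fold symmetrized Biot–Savart kernel
`K^{(m)}(x,y) = (1/m) Σ_{i=1}^m K(x − O_{2πi/m} y)`. -/
def symKernel (m : ℕ) (x y : EuclideanSpace ℝ (Fin 2)) : EuclideanSpace ℝ (Fin 2) :=
  (m : ℝ)⁻¹ • ∑ i ∈ Finset.Icc 1 m, BSKernel (x - rot (2 * Real.pi * i / m) y)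

open Complex ComplexConjugate Finset

theorem Finset.sum_Icc_one_eq_sum_range {M : Type*} [AddCommMonoid M] {m : ℕ} (hm : 0 < m)
    (g : ℕ → M) (h : g m = g 0) : ∑ i ∈ Icc 1 m, g i = ∑ i ∈ range m, g i := by
  rw [← Ico_add_one_right_eq_Icc, sum_Ico_succ_top hm, range_eq_Ico, sum_eq_sum_Ico_succ_bot hm, h,
    add_comm]

theorem IsPrimitiveRoot.sum_inv_sub_pow_mul {𝕜 : Type*} [NontriviallyNormedField 𝕜] {ζ : 𝕜}
    {n : ℕ} (hζ : IsPrimitiveRoot ζ n) (hn : 0 < n) {x y : 𝕜} (hxy : x ^ n ≠ y ^ n) :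
    ∑ i ∈ range n, (x - ζ ^ i * y)⁻¹ = n * x ^ (n - 1) / (x ^ n - y ^ n) := by
  have hprod (t : 𝕜) : t ^ n - y ^ n = ∏ i ∈ range n, (t - ζ ^ i * y) := by
    simpa [Polynomial.eval_prod] using
      congrArg (Polynomial.eval t) (X_pow_sub_C_eq_prod hζ hn (rfl : y ^ n = y ^ n))
  have hne : ∀ i ∈ range n, x - ζ ^ i * y ≠ 0 := by
    rw [← prod_ne_zero_iff, ← hprod]
    exact sub_ne_zero.mpr hxy
  calc ∑ i ∈ range n, (x - ζ ^ i * y)⁻¹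
      = ∑ i ∈ range n, logDeriv (fun t ↦ t - ζ ^ i * y) x := by simp [logDeriv_apply]
    _ = logDeriv (fun t ↦ t ^ n - y ^ n) x := by
        rw [funext hprod, logDeriv_prod hne fun i _ ↦ by fun_prop]
    _ = n * x ^ (n - 1) / (x ^ n - y ^ n) := by simp [logDeriv_apply]

theorem half_pow_le_norm_pow_sub_pow {𝕜 : Type*} [NormedDivisionRing 𝕜] {a b : 𝕜} {n : ℕ}
    (hn : n ≠ 0) (hab : 2 * ‖a‖ ≤ ‖b‖) : ‖b‖ ^ n / 2 ≤ ‖a ^ n - b ^ n‖ := by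
  have ha : ‖a‖ ^ n ≤ ‖b‖ ^ n / 2 := calc
    ‖a‖ ^ n ≤ (‖b‖ / 2) ^ n := by gcongr; linarith
    _ = ‖b‖ ^ n / 2 ^ n := div_pow _ _ _
    _ ≤ ‖b‖ ^ n / 2 := by gcongr; exacts [le_self_pow₀ one_le_two hn]
  calc ‖b‖ ^ n / 2 ≤ ‖b‖ ^ n - ‖a‖ ^ n := by linarith
    _ ≤ ‖a ^ n - b ^ n‖ := by
      rw [norm_sub_rev, ← norm_pow, ← norm_pow]; exact norm_sub_norm_le _ _

def toComplex : EuclideanSpace ℝ (Fin 2) ≃ₗᵢ[ℝ] ℂ := orthonormalBasisOneI.repr.symm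

theorem toComplex_apply (z : EuclideanSpace ℝ (Fin 2)) : toComplex z = z 0 + z 1 * I := rfl

theorem toComplex_rot (β : ℝ) (y : EuclideanSpace ℝ (Fin 2)) :
    toComplex (rot β y) = exp (β * I) * toComplex y := by
  apply Complex.ext <;> simp [toComplex_apply, rot, mk2, exp_mul_I, ← ofReal_cos, ← ofReal_sin]
  ring

theorem toComplex_BSKernel (z : EuclideanSpace ℝ (Fin 2)) :
    toComplex (BSKernel z) = I * conj ((2 * π * toComplex z)⁻¹) := by
  have hmk : toComplex (mk2 (-(z 1)) (z 0)) = I * toComplex z := by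
    apply Complex.ext <;> simp [toComplex_apply, mk2]
  rw [BSKernel, map_smul, hmk, ← toComplex.norm_map]
  set w := toComplex z
  rcases eq_or_ne w 0 with hw | hw
  · simp [hw]
  have hnorm : (‖w‖ : ℂ) ^ 2 = w * conj w := by
    rw [mul_conj, normSq_eq_norm_sq]; push_cast; rfl
  have hw' : conj w ≠ 0 := by simpa using hw
  rw [real_smul]
  push_cast
  rw [hnorm, map_inv₀, map_mul, map_mul, conj_ofReal, map_ofNat]
  field_simp

theorem toComplex_symKernel (m : ℕ) (x y : EuclideanSpace ℝ (Fin 2)) :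
    toComplex (symKernel m x y) = I * conj ((2 * π * m)⁻¹ *
      ∑ i ∈ Icc 1 m, (toComplex x - exp (2 * π * I / m) ^ i * toComplex y)⁻¹) := by
  have hexp (i : ℕ) : exp (((2 * π * i / m : ℝ) : ℂ) * I) = exp (2 * π * I / m) ^ i := by
    rw [← Complex.exp_nat_mul]; congr 1; push_cast; ring
  simp only [symKernel, map_smul, map_sum, toComplex_BSKernel, map_sub, toComplex_rot, hexp,
    real_smul, mul_sum, map_sum, mul_inv, map_mul]
  refine sum_congr rfl fun i _ ↦ ?_
  simp only [map_inv₀, conj_ofReal, map_ofNat]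
  push_cast
  ring

theorem norm_symKernel {m : ℕ} (hm : 0 < m) {x y : EuclideanSpace ℝ (Fin 2)}
    (hxy : toComplex x ^ m ≠ toComplex y ^ m) :
    ‖symKernel m x y‖ = ‖x‖ ^ (m - 1) / (2 * π * ‖toComplex x ^ m - toComplex y ^ m‖) := by
  have hζ := isPrimitiveRoot_exp m hm.ne'
  rw [← toComplex.norm_map, toComplex_symKernel, norm_mul, norm_I, one_mul, norm_conj,
    sum_Icc_one_eq_sum_range hm _ (by simp [hζ.pow_eq_one]), hζ.sum_inv_sub_pow_mul hm hxy,
    norm_mul, norm_div, norm_mul, norm_pow, toComplex.norm_map, norm_real, Complex.norm_natCast,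
    Real.norm_of_nonneg (by positivity)]
  field_simp

/-- Decay of the `m`-fold symmetrized Biot–Savart kernel: for `m ≥ 3` there is `C_m > 0`
such that `|K^{(m)}(x,y)| ≤ C_m |x|^{m−1} / |y|^m` whenever `|y| ≥ 2|x|`, `y ≠ 0`. -/
theorem symKernel_decay (m : ℕ) (hm : 3 ≤ m) :
    ∃ C : ℝ, 0 < C ∧ ∀ x y : EuclideanSpace ℝ (Fin 2), y ≠ 0 → 2 * ‖x‖ ≤ ‖y‖ →
      ‖symKernel m x y‖ ≤ C * ‖x‖ ^ (m - 1) / ‖y‖ ^ m := by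
  refine ⟨π⁻¹, by positivity, fun x y hy hxy ↦ ?_⟩
  have hy₀ : 0 < ‖y‖ ^ m / 2 := by have := norm_pos_iff.mpr hy; positivity
  have hxy' : 2 * ‖toComplex x‖ ≤ ‖toComplex y‖ := by simpa only [toComplex.norm_map]
  have hD := half_pow_le_norm_pow_sub_pow (n := m) (by omega) hxy'
  rw [toComplex.norm_map] at hD
  rw [norm_symKernel (by omega) (sub_ne_zero.mp (norm_pos_iff.mp (hy₀.trans_le hD)))]
  calc ‖x‖ ^ (m - 1) / (2 * π * ‖toComplex x ^ m - toComplex y ^ m‖)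
      ≤ ‖x‖ ^ (m - 1) / (2 * π * (‖y‖ ^ m / 2)) := by gcongr
    _ = π⁻¹ * ‖x‖ ^ (m - 1) / ‖y‖ ^ m := by field_simp
end
end

section
/- Let ε > 0, let C ≥ 0, and let f : [0, ε) → ℝ be continuous with f(t) ≥ 0 for all t, f(0) = 0, and suppose that for every t ∈ [0, ε) one has f(t) ≤ C · ∫₀ᵗ g(f(s)) ds, where g(a) := a · ln(1 + 1/a) for a > 0 and g(0) := 0. Then f(t) = 0 for every t ∈ [0, ε). -/
/-!
On `[0, 1]` the modulus is dominated by `ω(a) = a (1 - log a)`, which is increasing there and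
satisfies `∫₀ 1/ω = ∞`. For `c > C` the solutions `B(t) = exp (1 - K e^{-ct})` of `B' = c ω(B)`
are barriers: `F(t) = C ∫₀ᵗ g(f)` dominates `f`, so at a contact point `F = B ≤ 1` its right
derivative is `C g(f) ≤ C ω(B) < B'`, and the fencing theorem gives `f ≤ F ≤ B`. With
`K = M e^{cT}` this reads `f(T) ≤ exp (1 - M)` for every `M ≥ 1`.
-/

open Real Set MeasureTheory intervalIntegral

noncomputable section

/-- The Osgood modulus `g(a) = a·ln(1 + 1/a)` for `a > 0`, extended by `g(0) = 0`
(note that with Lean's convention `1/0 = 0` the formula itself gives `0` at `a = 0`). -/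
def osgoodMod (a : ℝ) : ℝ := a * Real.log (1 + 1 / a)

open Filter Topology

lemma osgoodMod_eq_sub {a : ℝ} (ha : 0 ≤ a) :
    osgoodMod a = a * log (a + 1) - a * log a := by
  rcases ha.eq_or_lt with rfl | ha
  · simp [osgoodMod]
  · rw [osgoodMod, show 1 + 1 / a = (a + 1) / a by field_simp, log_div (by positivity) ha.ne']
    ring

lemma continuousOn_osgoodMod : ContinuousOn osgoodMod (Ici 0) := by
  refine ContinuousOn.congr ?_ fun a ha => osgoodMod_eq_sub ha
  refine ContinuousOn.sub (continuousOn_id.mul (ContinuousOn.log (by fun_prop) ?_))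
    continuous_mul_log.continuousOn
  intro a ha
  linarith [mem_Ici.mp ha]

lemma osgoodMod_le_mul_one_sub_log {a : ℝ} (ha₀ : 0 ≤ a) (ha₁ : a ≤ 1) :
    osgoodMod a ≤ a * (1 - log a) := by
  have hlog : log (a + 1) ≤ 1 := by linarith [log_le_sub_one_of_pos (by linarith : 0 < a + 1)]
  rw [osgoodMod_eq_sub ha₀]
  nlinarith [mul_le_mul_of_nonneg_left hlog ha₀]

lemma monotoneOn_mul_one_sub_log : MonotoneOn (fun a : ℝ => a * (1 - log a)) (Icc 0 1) := by
  have hderiv : ∀ a ∈ Ioo (0 : ℝ) 1,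
      HasDerivAt (fun a : ℝ => a * (1 - log a)) (-log a) a := fun a ha => by
    refine ((hasDerivAt_id' a).mul ((hasDerivAt_log ha.1.ne').const_sub 1)).congr_deriv ?_
    rw [mul_neg, mul_inv_cancel₀ ha.1.ne']
    ring
  refine monotoneOn_of_deriv_nonneg (convex_Icc 0 1) ?_ ?_ ?_
  · exact (continuous_id.sub continuous_mul_log).continuousOn.congr fun a _ => by
      simp only [Pi.sub_apply, id]; ring
  · rw [interior_Icc]
    exact fun a ha => (hderiv a ha).differentiableAt.differentiableWithinAt
  · rw [interior_Icc]
    intro a ha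
    rw [(hderiv a ha).deriv, neg_nonneg]
    exact log_nonpos ha.1.le ha.2.le

/-- The solution of `B' = c B (1 - log B)`, obtained by separating variables:
`log (1 - log B) = log K - c t`. -/
def osgoodBarrier (K c t : ℝ) : ℝ := exp (1 - K * exp (-c * t))

lemma log_osgoodBarrier (K c t : ℝ) : log (osgoodBarrier K c t) = 1 - K * exp (-c * t) :=
  log_exp _

lemma hasDerivAt_osgoodBarrier (K c t : ℝ) :
    HasDerivAt (osgoodBarrier K c)
      (c * (osgoodBarrier K c t * (1 - log (osgoodBarrier K c t)))) t := by
  refine ((((hasDerivAt_id' t).const_mul (-c)).exp.const_mul K).const_sub 1).exp.congr_deriv ?_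
  rw [log_osgoodBarrier, osgoodBarrier]
  ring

lemma osgoodBarrier_le_one {K c t : ℝ} (h : 1 ≤ K * exp (-c * t)) : osgoodBarrier K c t ≤ 1 :=
  exp_le_one_iff.mpr (by linarith)

lemma osgoodBarrier_mul_exp (M c T : ℝ) : osgoodBarrier (M * exp (c * T)) c T = exp (1 - M) := by
  rw [osgoodBarrier, mul_assoc, ← exp_add, neg_mul, add_neg_cancel, exp_zero, mul_one]

lemma mul_osgoodMod_lt_deriv_osgoodBarrier {C c K t a : ℝ} (hC : 0 ≤ C) (hCc : C < c)
    (ha : 0 ≤ a) (haB : a ≤ osgoodBarrier K c t) (hB : osgoodBarrier K c t ≤ 1) :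
    C * osgoodMod a < c * (osgoodBarrier K c t * (1 - log (osgoodBarrier K c t))) := by
  set B := osgoodBarrier K c t
  have hB₀ : 0 < B := exp_pos _
  have hBpos : 0 < B * (1 - log B) := mul_pos hB₀ (by linarith [log_nonpos hB₀.le hB])
  calc C * osgoodMod a ≤ C * (a * (1 - log a)) :=
        mul_le_mul_of_nonneg_left (osgoodMod_le_mul_one_sub_log ha (haB.trans hB)) hC
    _ ≤ C * (B * (1 - log B)) :=
        mul_le_mul_of_nonneg_left (monotoneOn_mul_one_sub_log ⟨ha, haB.trans hB⟩
          ⟨hB₀.le, hB⟩ haB) hC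
    _ < c * (B * (1 - log B)) := mul_lt_mul_of_pos_right hCc hBpos

section Primitive

variable {E : Type*} [NormedAddCommGroup E] [NormedSpace ℝ E] {G : ℝ → E} {a b : ℝ}

lemma hasDerivWithinAt_integral_Ici_of_continuousOn [CompleteSpace E] {x : ℝ}
    (hG : ContinuousOn G (Icc a b)) (hx : x ∈ Ico a b) :
    HasDerivWithinAt (fun t => ∫ s in a..t, G s) (G x) (Ici x) x := by
  have hnhds : Icc a b ∈ 𝓝[>] x :=
    mem_of_superset (Icc_mem_nhdsGT hx.2) (Icc_subset_Icc_left hx.1)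
  exact integral_hasDerivWithinAt_right
    ((hG.mono (Icc_subset_Icc_right hx.2.le)).intervalIntegrable_of_Icc hx.1)
    ⟨_, hnhds, hG.aestronglyMeasurable measurableSet_Icc⟩
    ((hG x ⟨hx.1, hx.2.le⟩).mono_of_mem_nhdsWithin hnhds)

lemma continuousOn_primitive_of_continuousOn_Icc (hG : ContinuousOn G (Icc a b)) :
    ContinuousOn (fun t => ∫ s in a..t, G s) (Icc a b) :=
  (continuousOn_primitive (hG.integrableOn_compact isCompact_Icc)).congr fun _ ht =>
    integral_of_le ht.1

end Primitive

theorem le_osgoodBarrier_of_le_integral_osgoodMod {C c K T : ℝ} {f : ℝ → ℝ} (hC : 0 ≤ C)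
    (hCc : C < c) (hK : 1 ≤ K * exp (-c * T)) (hf : ContinuousOn f (Icc 0 T))
    (hf₀ : ∀ t ∈ Icc 0 T, 0 ≤ f t)
    (hineq : ∀ t ∈ Icc 0 T, f t ≤ C * ∫ s in (0 : ℝ)..t, osgoodMod (f s)) :
    ∀ t ∈ Icc 0 T, f t ≤ osgoodBarrier K c t := by
  have hG : ContinuousOn (fun s => osgoodMod (f s)) (Icc 0 T) :=
    continuousOn_osgoodMod.comp hf hf₀
  have hB₁ : ∀ t ∈ Icc 0 T, osgoodBarrier K c t ≤ 1 := fun t ht => by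
    have hsplit : exp (-c * t) = exp (-c * T) * exp (c * (T - t)) := by
      rw [← exp_add]; ring_nf
    have : 1 ≤ exp (c * (T - t)) := one_le_exp (mul_nonneg (by linarith) (by linarith [ht.2]))
    refine osgoodBarrier_le_one ?_
    rw [hsplit, ← mul_assoc]
    nlinarith
  intro t ht
  refine (hineq t ht).trans (image_le_of_deriv_right_lt_deriv_boundary
    (continuousOn_const.mul (continuousOn_primitive_of_continuousOn_Icc hG))
    (fun x hx => (hasDerivWithinAt_integral_Ici_of_continuousOn hG hx).const_mul C)
    ?_ (hasDerivAt_osgoodBarrier K c) (fun x hx hFB => ?_) ht)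
  · show C * (∫ s in (0 : ℝ)..0, osgoodMod (f s)) ≤ _
    rw [integral_same, mul_zero]
    exact (exp_pos _).le
  · have hx := Ico_subset_Icc_self hx
    exact mul_osgoodMod_lt_deriv_osgoodBarrier hC hCc (hf₀ x hx) (hFB ▸ hineq x hx) (hB₁ x hx)

theorem osgood_uniqueness_general (ε : ℝ) (C : ℝ) (hC : 0 ≤ C) (f : ℝ → ℝ)
    (hcont : ContinuousOn f (Ico 0 ε))
    (hnonneg : ∀ t ∈ Ico (0 : ℝ) ε, 0 ≤ f t)
    (hineq : ∀ t ∈ Ico (0 : ℝ) ε, f t ≤ C * ∫ s in (0 : ℝ)..t, osgoodMod (f s)) :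
    ∀ t ∈ Ico (0 : ℝ) ε, f t = 0 := by
  intro t ht
  have hsub : Icc 0 t ⊆ Ico 0 ε := Icc_subset_Ico_right ht.2
  have hbound : ∀ M ≥ 1, f t ≤ exp (1 - M) := fun M hM => by
    have hK : 1 ≤ M * exp ((C + 1) * t) * exp (-(C + 1) * t) := by
      rwa [mul_assoc, ← exp_add, neg_mul, add_neg_cancel, exp_zero, mul_one]
    simpa only [osgoodBarrier_mul_exp] using
      le_osgoodBarrier_of_le_integral_osgoodMod hC (lt_add_one C) hK (hcont.mono hsub)
        (fun s hs => hnonneg s (hsub hs)) (fun s hs => hineq s (hsub hs)) t ⟨ht.1, le_rfl⟩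
  have hlim : Tendsto (fun M => exp (1 - M)) atTop (𝓝 0) :=
    tendsto_exp_atBot.comp (tendsto_atBot_add_const_left _ _ tendsto_neg_atTop_atBot)
  exact le_antisymm (ge_of_tendsto hlim (eventually_ge_atTop 1 |>.mono hbound)) (hnonneg t ht)

/-- Osgood-type uniqueness lemma: a continuous nonnegative function on `[0, ε)` with
`f(0) = 0` and `f(t) ≤ C ∫₀ᵗ f(s) ln(1 + 1/f(s)) ds` vanishes identically. -/
theorem osgood_uniqueness (ε : ℝ) (hε : 0 < ε) (C : ℝ) (hC : 0 ≤ C) (f : ℝ → ℝ)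
    (hcont : ContinuousOn f (Ico 0 ε))
    (hnonneg : ∀ t ∈ Ico (0 : ℝ) ε, 0 ≤ f t)
    (hzero : f 0 = 0)
    (hineq : ∀ t ∈ Ico (0 : ℝ) ε, f t ≤ C * ∫ s in (0 : ℝ)..t, osgoodMod (f s)) :
    ∀ t ∈ Ico (0 : ℝ) ε, f t = 0 :=
  osgood_uniqueness_general ε C hC f hcont hnonneg hineq
end
end

section
/- Let m ≥ 3 be an integer and let Θ : ℝ² → ℝ be continuously differentiable, m-fold rotationally symmetric (Θ(O_{2π/m} x) = Θ(x) for all x), and odd with respect to the x₁-axis (Θ(x₁, −x₂) = −Θ(x₁, x₂) for all (x₁, x₂)). Then for every R > 0, the vector-valued integrals ∫_{B(0,R)} y₁ ∇Θ(y) dy and ∫_{B(0,R)} y₂ ∇Θ(y) dy over the Euclidean ball B(0,R) ⊂ ℝ² are both equal to the zero vector. -/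
/-! If `Q` is orthogonal and `Θ ∘ Q = εΘ`, then `∇Θ(Qy) = εQ∇Θ(y)`, so the moments
`M(u) = ∫_{B(0,R)} ⟪y, u⟫ ∇Θ(y) dy` satisfy `M(Qu) = εQM(u)`. In the standard basis `e₀, e₁`,
oddness in `x₂` kills the diagonal entries `M(e₀)₀`, `M(e₁)₁`, and invariance under the rotation by
`2π/m`, whose sine does not vanish as `m ≥ 3`, gives `M(e₁)₀ = -M(e₀)₁`. Finally
`M(e₀)₁ - M(e₁)₀ = ∫_{B(0,R)} ⟪∇Θ(y), O_{π/2} y⟫ dy` vanishes for every `C¹` function `Θ`: it is the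
derivative at `β = 0` of the constant function `β ↦ ∫_{B(0,R)} Θ(O_β y) dy`. -/

open Real MeasureTheory Metric

noncomputable section

open scoped RealInnerProductSpace

section Gradient

variable {E : Type*} [NormedAddCommGroup E] [InnerProductSpace ℝ E] [CompleteSpace E]

theorem ContDiff.continuous_gradient {f : E → ℝ} (hf : ContDiff ℝ 1 f) :
    Continuous (gradient f) :=
  (InnerProductSpace.toDual ℝ E).symm.continuous.comp (hf.continuous_fderiv one_ne_zero)

theorem gradient_apply_map_of_apply_map_eq_mul (Q : E ≃ₗᵢ[ℝ] E) {f : E → ℝ} {c : ℝ} {x : E}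
    (hf : DifferentiableAt ℝ f x) (hQ : ∀ y, f (Q y) = c * f y) :
    gradient f (Q x) = c • Q (gradient f x) := by
  have hcomp : fderiv ℝ (f ∘ Q) x = c • fderiv ℝ f x := by
    rw [show f ∘ Q = fun y => c * f y from funext hQ, fderiv_const_mul hf]
  refine ext_inner_right ℝ fun w => ?_
  obtain ⟨v, rfl⟩ := Q.surjective w
  have hchain : fderiv ℝ (f ∘ Q) x = (fderiv ℝ f (Q x)).comp (Q : E →L[ℝ] E) :=
    Q.toContinuousLinearEquiv.comp_right_fderiv
  have := congrArg (fun L : E →L[ℝ] ℝ => L v) (hchain.symm.trans hcomp)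
  rw [inner_gradient_left, real_inner_smul_left, Q.inner_map_map, inner_gradient_left]
  simpa using this

end Gradient

section Moment

variable {E : Type*} [NormedAddCommGroup E] [InnerProductSpace ℝ E] [FiniteDimensional ℝ E]
  [MeasurableSpace E] [BorelSpace E]

theorem setIntegral_closedBall_comp_linearIsometryEquiv {X : Type*} [NormedAddCommGroup X]
    [NormedSpace ℝ X] (Q : E ≃ₗᵢ[ℝ] E) (g : E → X) (R : ℝ) :
    ∫ y in closedBall (0 : E) R, g (Q y) = ∫ y in closedBall (0 : E) R, g y := by
  have hpre : Q ⁻¹' closedBall 0 R = closedBall 0 R := by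
    ext y; simp
  conv_lhs => rw [← hpre]
  exact Q.measurePreserving.setIntegral_preimage_emb Q.toHomeomorph.measurableEmbedding g _

def gradientMoment (f : E → ℝ) (R : ℝ) (u : E) : E :=
  ∫ y in closedBall (0 : E) R, ⟪y, u⟫ • gradient f y

theorem gradientMoment_map_of_apply_map_eq_mul (Q : E ≃ₗᵢ[ℝ] E) {f : E → ℝ} {c : ℝ}
    (hf : Differentiable ℝ f) (hQ : ∀ y, f (Q y) = c * f y) (R : ℝ) (u : E) :
    gradientMoment f R (Q u) = c • Q (gradientMoment f R u) := by
  calc gradientMoment f R (Q u)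
      = ∫ y in closedBall (0 : E) R, ⟪Q y, Q u⟫ • gradient f (Q y) :=
        (setIntegral_closedBall_comp_linearIsometryEquiv Q _ R).symm
    _ = ∫ y in closedBall (0 : E) R, c • Q (⟪y, u⟫ • gradient f y) := by
        simp only [Q.inner_map_map, gradient_apply_map_of_apply_map_eq_mul Q (hf _) hQ,
          map_smul, smul_comm c]
    _ = c • Q (gradientMoment f R u) := by
        rw [integral_smul]
        exact congrArg _ (Q.toLinearIsometry.integral_comp_comm _)

theorem gradientMoment_smul (f : E → ℝ) (R a : ℝ) (u : E) :
    gradientMoment f R (a • u) = a • gradientMoment f R u := by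
  simp only [gradientMoment, inner_smul_right, mul_smul, integral_smul]

theorem integrableOn_closedBall_inner_smul_gradient {f : E → ℝ} (hf : Continuous (gradient f))
    (R : ℝ) (u : E) :
    IntegrableOn (fun y => ⟪y, u⟫ • gradient f y) (closedBall (0 : E) R) :=
  ((continuous_id.inner continuous_const).smul hf).continuousOn.integrableOn_compact
    (isCompact_closedBall 0 R)

theorem gradientMoment_add {f : E → ℝ} (hf : Continuous (gradient f)) (R : ℝ) (u v : E) :
    gradientMoment f R (u + v) = gradientMoment f R u + gradientMoment f R v := by
  simp only [gradientMoment, inner_add_right, add_smul]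
  exact integral_add (integrableOn_closedBall_inner_smul_gradient hf R u)
    (integrableOn_closedBall_inner_smul_gradient hf R v)

theorem inner_gradientMoment {f : E → ℝ} (hf : Continuous (gradient f)) (R : ℝ) (u v : E) :
    ⟪gradientMoment f R u, v⟫ = ∫ y in closedBall (0 : E) R, ⟪y, u⟫ * ⟪gradient f y, v⟫ := by
  rw [gradientMoment, real_inner_comm,
    ← integral_inner (integrableOn_closedBall_inner_smul_gradient hf R u)]
  simp only [inner_smul_right, real_inner_comm]

end Moment

local notation "E2" => EuclideanSpace ℝ (Fin 2)

@[simp] theorem mk2_apply_zero (a b : ℝ) : mk2 a b 0 = a := rfl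
@[simp] theorem mk2_apply_one (a b : ℝ) : mk2 a b 1 = b := rfl

@[simp] theorem rot_apply_zero (β : ℝ) (y : E2) : rot β y 0 = cos β * y 0 - sin β * y 1 := rfl
@[simp] theorem rot_apply_one (β : ℝ) (y : E2) : rot β y 1 = sin β * y 0 + cos β * y 1 := rfl

theorem norm_eq_sqrt_fin_two (y : E2) : ‖y‖ = √(y 0 ^ 2 + y 1 ^ 2) := by
  simp [EuclideanSpace.norm_eq, Fin.sum_univ_two]

@[simp] theorem rot_zero (y : E2) : rot 0 y = y := by
  ext i; fin_cases i <;> simp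

theorem rot_rot (α β : ℝ) (y : E2) : rot α (rot β y) = rot (α + β) y := by
  ext i; fin_cases i <;> simp [cos_add, sin_add] <;> ring

def rotLIE (β : ℝ) : E2 ≃ₗᵢ[ℝ] E2 where
  toFun := rot β
  invFun := rot (-β)
  map_add' x y := by ext i; fin_cases i <;> simp <;> ring
  map_smul' c x := by ext i; fin_cases i <;> simp <;> ring
  left_inv x := by simp only [rot_rot, neg_add_cancel, rot_zero]
  right_inv x := by simp only [rot_rot, add_neg_cancel, rot_zero]
  norm_map' x := by
    simp only [LinearEquiv.coe_mk, LinearMap.coe_mk, AddHom.coe_mk, norm_eq_sqrt_fin_two,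
      rot_apply_zero, rot_apply_one]
    congr 1
    linear_combination (x 0 ^ 2 + x 1 ^ 2) * sin_sq_add_cos_sq β

@[simp] theorem coe_rotLIE (β : ℝ) : ⇑(rotLIE β) = rot β := rfl

def reflLIE : E2 ≃ₗᵢ[ℝ] E2 where
  toFun x := mk2 (x 0) (-x 1)
  invFun x := mk2 (x 0) (-x 1)
  map_add' x y := by ext i; fin_cases i <;> simp; ring
  map_smul' c x := by ext i; fin_cases i <;> simp
  left_inv x := by ext i; fin_cases i <;> simp
  right_inv x := by ext i; fin_cases i <;> simp
  norm_map' x := by simp [norm_eq_sqrt_fin_two]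

@[simp] theorem reflLIE_apply (x : E2) : reflLIE x = mk2 (x 0) (-x 1) := rfl

theorem rot_eq_cos_smul_add_sin_smul (β : ℝ) (y : E2) :
    rot β y = cos β • y + sin β • rot (π / 2) y := by
  ext i; fin_cases i <;> simp <;> ring

theorem hasDerivAt_rot (β : ℝ) (y : E2) :
    HasDerivAt (fun b => rot b y) (rot (β + π / 2) y) β := by
  have h : (fun b => rot b y) = fun b => cos b • y + sin b • rot (π / 2) y :=
    funext fun b => rot_eq_cos_smul_add_sin_smul b y
  rw [h, rot_eq_cos_smul_add_sin_smul (β + π / 2), cos_add_pi_div_two, sin_add_pi_div_two]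
  exact ((hasDerivAt_cos β).smul_const y).add ((hasDerivAt_sin β).smul_const _)

theorem integral_inner_gradient_rot_pi_div_two {f : E2 → ℝ} (hf : Differentiable ℝ f)
    (hgrad : Continuous (gradient f)) (R : ℝ) :
    ∫ y in closedBall (0 : E2) R, ⟪gradient f y, rot (π / 2) y⟫ = 0 := by
  obtain ⟨C, hC⟩ := (isCompact_closedBall (0 : E2) R).exists_bound_of_continuousOn
    hgrad.continuousOn
  have hbound : ∀ y ∈ closedBall (0 : E2) R, ∀ β : ℝ,
      ‖⟪gradient f (rot β y), rot (β + π / 2) y⟫‖ ≤ C * R := by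
    intro y hy β
    have hy' (γ : ℝ) : rot γ y ∈ closedBall (0 : E2) R := by
      simpa [← coe_rotLIE] using hy
    refine (norm_inner_le_norm _ _).trans (mul_le_mul (hC _ (hy' β)) ?_ (norm_nonneg _)
      ((norm_nonneg _).trans (hC _ (hy' β))))
    simpa using hy' (β + π / 2)
  have hderiv := hasDerivAt_integral_of_dominated_loc_of_deriv_le
    (μ := volume.restrict (closedBall (0 : E2) R)) (F := fun β y => f (rot β y))
    (F' := fun β y => ⟪gradient f (rot β y), rot (β + π / 2) y⟫) (x₀ := 0)
    (bound := fun _ => C * R) Filter.univ_mem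
    (Filter.Eventually.of_forall fun β =>
      (hf.continuous.comp (rotLIE β).continuous).aestronglyMeasurable)
    ((hf.continuous.comp (rotLIE 0).continuous).continuousOn.integrableOn_compact
      (isCompact_closedBall _ _))
    ((hgrad.comp (rotLIE 0).continuous).inner (rotLIE (0 + π / 2)).continuous).aestronglyMeasurable
    ((ae_restrict_mem measurableSet_closedBall).mono fun y hy β _ => hbound y hy β)
    (integrableOn_const measure_closedBall_lt_top.ne)
    (Filter.Eventually.of_forall fun y β _ => by
      rw [inner_gradient_left]
      exact (hf _).hasFDerivAt.comp_hasDerivAt β (hasDerivAt_rot β y))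
  have hconst (β : ℝ) : ∫ y in closedBall (0 : E2) R, f (rot β y) =
      ∫ y in closedBall (0 : E2) R, f y :=
    setIntegral_closedBall_comp_linearIsometryEquiv (rotLIE β) f R
  simp only [hconst] at hderiv
  simpa using hderiv.2.unique (hasDerivAt_const 0 _)

section EuclideanSpace

variable {ι : Type*} [Fintype ι] [DecidableEq ι]

theorem gradientMoment_single (f : EuclideanSpace ℝ ι → ℝ) (R : ℝ) (i : ι) :
    gradientMoment f R (EuclideanSpace.single i 1) =
      ∫ y in closedBall (0 : EuclideanSpace ℝ ι) R, y i • gradient f y := by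
  simp [gradientMoment, EuclideanSpace.inner_single_right]

theorem gradientMoment_single_apply {f : EuclideanSpace ℝ ι → ℝ} (hf : Continuous (gradient f))
    (R : ℝ) (i j : ι) :
    gradientMoment f R (EuclideanSpace.single i 1) j =
      ∫ y in closedBall (0 : EuclideanSpace ℝ ι) R, y i * gradient f y j := by
  simpa only [EuclideanSpace.inner_single_right, one_mul, conj_trivial] using
    inner_gradientMoment hf R (EuclideanSpace.single i 1) (EuclideanSpace.single j 1)

end EuclideanSpace

local notation "e₀" => EuclideanSpace.single (0 : Fin 2) (1 : ℝ)
local notation "e₁" => EuclideanSpace.single (1 : Fin 2) (1 : ℝ)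

theorem gradientMoment_single_apply_comm {f : E2 → ℝ} (hf : Differentiable ℝ f)
    (hgrad : Continuous (gradient f)) (R : ℝ) :
    gradientMoment f R e₀ 1 = gradientMoment f R e₁ 0 := by
  have h := integral_inner_gradient_rot_pi_div_two hf hgrad R
  have hpt : (fun y => ⟪gradient f y, rot (π / 2) y⟫) =
      fun y => y 0 * gradient f y 1 - y 1 * gradient f y 0 := by
    funext y
    simp only [PiLp.inner_apply, Fin.sum_univ_two, RCLike.inner_apply, conj_trivial,
      rot_apply_zero, rot_apply_one, cos_pi_div_two, sin_pi_div_two]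
    ring
  have hint (i j : Fin 2) :
      IntegrableOn (fun y : E2 => y i * gradient f y j) (closedBall 0 R) :=
    (by fun_prop : Continuous fun y : E2 => y i * gradient f y j).continuousOn.integrableOn_compact
      (isCompact_closedBall 0 R)
  rw [hpt, integral_sub (hint 0 1) (hint 1 0), sub_eq_zero] at h
  rwa [gradientMoment_single_apply hgrad, gradientMoment_single_apply hgrad]

theorem gradientMoment_single_one_apply_zero_of_rot_invariant {f : E2 → ℝ} {α : ℝ}
    (hf : Differentiable ℝ f) (hgrad : Continuous (gradient f)) (hrot : ∀ x, f (rot α x) = f x)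
    (hα : sin α ≠ 0) (R : ℝ) :
    gradientMoment f R e₁ 0 = -gradientMoment f R e₀ 1 := by
  have h :=
    gradientMoment_map_of_apply_map_eq_mul (rotLIE α) hf (c := 1) (by simpa using hrot) R e₀
  have he : rotLIE α e₀ = cos α • e₀ + sin α • e₁ := by
    ext i; fin_cases i <;> simp
  rw [he, gradientMoment_add hgrad, gradientMoment_smul, gradientMoment_smul, one_smul] at h
  have h0 := congrArg (· 0) h
  simp only [PiLp.add_apply, PiLp.smul_apply, smul_eq_mul, coe_rotLIE, rot_apply_zero] at h0
  exact mul_left_cancel₀ hα (by linarith)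

theorem gradientMoment_single_zero_apply_zero_of_odd {f : E2 → ℝ} (hf : Differentiable ℝ f)
    (hodd : ∀ x : E2, f (mk2 (x 0) (-x 1)) = -f x) (R : ℝ) :
    gradientMoment f R e₀ 0 = 0 := by
  have h := gradientMoment_map_of_apply_map_eq_mul reflLIE hf (c := -1) (by simpa using hodd) R e₀
  have he : reflLIE e₀ = e₀ := by
    ext i; fin_cases i <;> simp
  rw [he] at h
  have h0 := congrArg (· 0) h
  simp only [reflLIE_apply, neg_smul, one_smul, PiLp.neg_apply, mk2_apply_zero] at h0
  linarith

theorem gradientMoment_single_one_apply_one_of_odd {f : E2 → ℝ} (hf : Differentiable ℝ f)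
    (hodd : ∀ x : E2, f (mk2 (x 0) (-x 1)) = -f x) (R : ℝ) :
    gradientMoment f R e₁ 1 = 0 := by
  have h := gradientMoment_map_of_apply_map_eq_mul reflLIE hf (c := -1) (by simpa using hodd) R e₁
  have he : reflLIE e₁ = (-1 : ℝ) • e₁ := by
    ext i; fin_cases i <;> simp
  rw [he, gradientMoment_smul] at h
  have h1 := congrArg (· 1) h
  simp only [neg_smul, one_smul, PiLp.neg_apply, reflLIE_apply, mk2_apply_one, neg_neg] at h1
  linarith

theorem sin_two_pi_div_ne_zero {m : ℕ} (hm : 3 ≤ m) : sin (2 * π / m) ≠ 0 := by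
  have hm' : (3 : ℝ) ≤ m := by exact_mod_cast hm
  refine (sin_pos_of_pos_of_lt_pi (by positivity) ?_).ne'
  rw [div_lt_iff₀ (by positivity)]
  nlinarith [pi_pos]

/-- Orthogonality of `∇Θ` to the first circular Fourier modes on every ball, for `Θ`
`m`-fold rotationally symmetric (`m ≥ 3`) and odd with respect to the `x₁`-axis:
`∫_{B(0,R)} y₁ ∇Θ(y) dy = 0 = ∫_{B(0,R)} y₂ ∇Θ(y) dy`. -/
theorem gradient_first_modes_vanish (m : ℕ) (hm : 3 ≤ m)
    (Θ : EuclideanSpace ℝ (Fin 2) → ℝ) (hΘ : ContDiff ℝ 1 Θ)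
    (hsym : ∀ x, Θ (rot (2 * Real.pi / m) x) = Θ x)
    (hodd : ∀ x : EuclideanSpace ℝ (Fin 2), Θ (mk2 (x 0) (-(x 1))) = -Θ x) :
    ∀ R : ℝ, 0 < R →
      (∫ y in closedBall (0 : EuclideanSpace ℝ (Fin 2)) R, (y 0) • gradient Θ y) = 0 ∧
      (∫ y in closedBall (0 : EuclideanSpace ℝ (Fin 2)) R, (y 1) • gradient Θ y) = 0 := by
  intro R _
  have hdiff : Differentiable ℝ Θ := hΘ.differentiable one_ne_zero
  have hgrad : Continuous (gradient Θ) := hΘ.continuous_gradient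
  have hcomm := gradientMoment_single_apply_comm hdiff hgrad R
  have hanti := gradientMoment_single_one_apply_zero_of_rot_invariant hdiff hgrad hsym
    (sin_two_pi_div_ne_zero hm) R
  have h00 := gradientMoment_single_zero_apply_zero_of_odd hdiff hodd R
  have h11 := gradientMoment_single_one_apply_one_of_odd hdiff hodd R
  rw [← gradientMoment_single, ← gradientMoment_single]
  constructor <;> ext i <;> fin_cases i <;> simp <;> linarith
end
end

section
/- For every integer m with m ≥ 2, the improper integral ∫_{−π}^{π} 3 cos(mθ) cos(θ) ln(1 − cos(θ)) dθ converges (the integrand is integrable on [−π, π]) and equals −6π m / (m² − 1). -/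
/-!
Integrating by parts against `sin (nθ) log (1 - cos θ)` on `[0, π]` (the boundary terms vanish
since `θ log θ → 0`) turns `n ∫₀^π cos (nθ) log (1 - cos θ)` into `-∫₀^π sin (nθ) cot (θ / 2)`,
and `sin (nθ) cot (θ / 2) = 1 + 2 ∑_{0<k<n} cos (kθ) + cos (nθ)` integrates to `π`.
Hence `∫_{-π}^π cos (nθ) log (1 - cos θ) = -2π / n` for `n ≥ 1`, and the theorem follows from
`2 cos (mθ) cos θ = cos ((m + 1)θ) + cos ((m - 1)θ)`.
-/

open Real MeasureTheory intervalIntegral Set Filter Topology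

noncomputable section

theorem integral_neg_self_eq_two_smul_of_even {E : Type*} [NormedAddCommGroup E]
    [NormedSpace ℝ E] {f : ℝ → E} {a : ℝ} (hf : Function.Even f)
    (hint : IntervalIntegrable f volume 0 a) :
    ∫ x in -a..a, f x = (2 : ℝ) • ∫ x in 0..a, f x := by
  have hneg : ∫ x in -a..0, f x = ∫ x in 0..a, f x := by
    simpa [hf _] using (integral_comp_neg (a := 0) (b := a) f).symm
  have hint_neg : IntervalIntegrable f volume (-a) 0 := by
    simpa [hf _] using (IntervalIntegrable.iff_comp_neg).mp hint.symm
  rw [← integral_add_adjacent_intervals hint_neg hint, hneg, two_smul]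

theorem intervalIntegrable_cos_mul (c a b : ℝ) :
    IntervalIntegrable (fun θ => cos (c * θ)) volume a b :=
  Continuous.intervalIntegrable (by fun_prop) a b

theorem integral_cos_nat_mul_zero_pi {n : ℕ} (hn : n ≠ 0) : ∫ θ in 0..π, cos (n * θ) = 0 := by
  have hn' : (n : ℝ) ≠ 0 := by exact_mod_cast hn
  simp [integral_comp_mul_left (fun x => cos x) hn', sin_nat_mul_pi]

theorem cos_ne_one_of_mem_Ioo {θ : ℝ} (h : θ ∈ Ioo 0 π) : cos θ ≠ 1 := by
  simpa using (cos_lt_cos_of_nonneg_of_le_pi le_rfl h.2.le h.1).ne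

theorem intervalIntegrable_log_one_sub_cos (a b : ℝ) :
    IntervalIntegrable (fun θ => log (1 - cos θ)) volume a b :=
  (analyticOnNhd_const.sub analyticOnNhd_cos).meromorphicOn.intervalIntegrable_log

theorem intervalIntegrable_mul_log_one_sub_cos {g : ℝ → ℝ} (hg : Continuous g) (a b : ℝ) :
    IntervalIntegrable (fun θ => g θ * log (1 - cos θ)) volume a b :=
  (intervalIntegrable_log_one_sub_cos a b).continuousOn_mul hg.continuousOn

theorem hasDerivAt_log_one_sub_cos {θ : ℝ} (h : cos θ ≠ 1) :
    HasDerivAt (fun θ => log (1 - cos θ)) (sin θ / (1 - cos θ)) θ := by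
  simpa using ((hasDerivAt_cos θ).const_sub 1).log (sub_ne_zero.mpr h.symm)

theorem log_one_sub_cos_mem_Icc {θ : ℝ} (h0 : 0 < θ) (hπ : θ ≤ π) :
    log (1 - cos θ) ∈ Icc (log (2 / π ^ 2) + 2 * log θ) (log 2) := by
  have hlower : 2 / π ^ 2 * θ ^ 2 ≤ 1 - cos θ := by
    linarith [cos_le_one_sub_mul_cos_sq (abs_le.mpr ⟨by linarith, hπ⟩)]
  have hpos : 0 < 1 - cos θ := lt_of_lt_of_le (by positivity) hlower
  constructor
  · calc log (2 / π ^ 2) + 2 * log θ = log (2 / π ^ 2 * θ ^ 2) := by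
          rw [log_mul (by positivity) (by positivity), log_pow]; push_cast; ring
      _ ≤ log (1 - cos θ) := log_le_log (by positivity) hlower
  · exact log_le_log hpos (by linarith [neg_one_le_cos θ])

theorem tendsto_mul_log_one_sub_cos :
    Tendsto (fun θ => θ * log (1 - cos θ)) (𝓝[>] 0) (𝓝 0) := by
  have hid : Tendsto (fun θ : ℝ => θ) (𝓝[>] 0) (𝓝 0) :=
    tendsto_nhdsWithin_of_tendsto_nhds tendsto_id
  have hmul_log : Tendsto (fun θ : ℝ => θ * log θ) (𝓝[>] 0) (𝓝 0) := by
    simpa using tendsto_nhdsWithin_of_tendsto_nhds (continuous_mul_log.tendsto 0)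
  have hlower : Tendsto (fun θ => θ * (log (2 / π ^ 2) + 2 * log θ)) (𝓝[>] 0) (𝓝 0) := by
    simpa [mul_add, mul_left_comm] using (hid.mul_const _).add (hmul_log.const_mul 2)
  have hupper : Tendsto (fun θ => θ * log 2) (𝓝[>] 0) (𝓝 0) := by
    simpa using hid.mul_const _
  refine tendsto_of_tendsto_of_tendsto_of_le_of_le' hlower hupper ?_ ?_
  · filter_upwards [Ioc_mem_nhdsGT pi_pos] with θ hθ
      using mul_le_mul_of_nonneg_left (log_one_sub_cos_mem_Icc hθ.1 hθ.2).1 hθ.1.le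
  · filter_upwards [Ioc_mem_nhdsGT pi_pos] with θ hθ
      using mul_le_mul_of_nonneg_left (log_one_sub_cos_mem_Icc hθ.1 hθ.2).2 hθ.1.le

theorem tendsto_sin_nat_mul_mul_log_one_sub_cos (n : ℕ) :
    Tendsto (fun θ => sin (n * θ) * log (1 - cos θ)) (𝓝[>] 0) (𝓝 0) := by
  have hbound := tendsto_mul_log_one_sub_cos.abs.const_mul (n : ℝ)
  rw [abs_zero, mul_zero] at hbound
  refine squeeze_zero_norm' ?_ hbound
  filter_upwards [self_mem_nhdsWithin] with θ (hθ : 0 < θ)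
  calc ‖sin (n * θ) * log (1 - cos θ)‖ = |sin (n * θ)| * |log (1 - cos θ)| := by
        rw [norm_mul, norm_eq_abs, norm_eq_abs]
    _ ≤ (n * θ) * |log (1 - cos θ)| := by
        gcongr
        simpa [abs_of_pos hθ] using abs_sin_le_abs (x := n * θ)
    _ = n * |θ * log (1 - cos θ)| := by rw [abs_mul, abs_of_pos hθ]; ring

/-- `sin (nθ) cot (θ / 2)`, written via `cot (θ / 2) = sin θ / (1 - cos θ)`. -/
def sinMulCotHalf (n : ℕ) (θ : ℝ) : ℝ := sin (n * θ) * sin θ / (1 - cos θ)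

theorem sinMulCotHalf_succ (n : ℕ) {θ : ℝ} (h : cos θ ≠ 1) :
    sinMulCotHalf (n + 1) θ = sinMulCotHalf n θ + cos ((n + 1) * θ) + cos (n * θ) := by
  have h' : 1 - cos θ ≠ 0 := sub_ne_zero.mpr h.symm
  simp only [sinMulCotHalf, Nat.cast_succ, add_mul, one_mul, sin_add, cos_add]
  field_simp
  linear_combination cos (n * θ) * sin_sq_add_cos_sq θ

theorem eqOn_sinMulCotHalf_succ (n : ℕ) :
    EqOn (sinMulCotHalf (n + 1))
      (fun θ => sinMulCotHalf n θ + cos ((n + 1) * θ) + cos (n * θ)) (uIoo 0 π) := by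
  intro θ hθ
  rw [uIoo_of_le pi_pos.le] at hθ
  exact sinMulCotHalf_succ n (cos_ne_one_of_mem_Ioo hθ)

theorem intervalIntegrable_sinMulCotHalf (n : ℕ) :
    IntervalIntegrable (sinMulCotHalf n) volume 0 π := by
  induction n with
  | zero => unfold sinMulCotHalf; simp
  | succ n ih =>
    refine IntervalIntegrable.congr_uIoo ?_ (eqOn_sinMulCotHalf_succ n).symm
    exact (ih.add (intervalIntegrable_cos_mul ..)).add (intervalIntegrable_cos_mul ..)

theorem integral_sinMulCotHalf {n : ℕ} (hn : n ≠ 0) : ∫ θ in 0..π, sinMulCotHalf n θ = π := by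
  induction n with
  | zero => exact absurd rfl hn
  | succ n ih =>
    rw [integral_congr_uIoo (eqOn_sinMulCotHalf_succ n),
      integral_add ((intervalIntegrable_sinMulCotHalf n).add (intervalIntegrable_cos_mul ..))
        (intervalIntegrable_cos_mul ..),
      integral_add (intervalIntegrable_sinMulCotHalf n) (intervalIntegrable_cos_mul ..)]
    rcases eq_or_ne n 0 with rfl | hn0
    · simp [sinMulCotHalf]
    · have hsucc := integral_cos_nat_mul_zero_pi n.succ_ne_zero
      push_cast at hsucc
      rw [ih hn0, hsucc, integral_cos_nat_mul_zero_pi hn0, add_zero, add_zero]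

theorem integral_cos_nat_mul_mul_log_one_sub_cos_zero_pi {n : ℕ} (hn : n ≠ 0) :
    ∫ θ in 0..π, cos (n * θ) * log (1 - cos θ) = -π / n := by
  have hn' : (n : ℝ) ≠ 0 := by exact_mod_cast hn
  have hint : IntervalIntegrable (fun θ => cos (n * θ) * log (1 - cos θ)) volume 0 π :=
    intervalIntegrable_mul_log_one_sub_cos (by fun_prop) 0 π
  have hderiv : ∀ θ ∈ Ioo 0 π, HasDerivAt (fun θ => sin (n * θ) * log (1 - cos θ))
      (n * (cos (n * θ) * log (1 - cos θ)) + sinMulCotHalf n θ) θ := by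
    intro θ hθ
    have hsin : HasDerivAt (fun θ => sin (n * θ)) (cos (n * θ) * n) θ := by
      simpa using ((hasDerivAt_id' θ).const_mul (n : ℝ)).sin
    refine (hsin.fun_mul (hasDerivAt_log_one_sub_cos (cos_ne_one_of_mem_Ioo hθ))).congr_deriv ?_
    rw [sinMulCotHalf]
    ring
  have hπ : Tendsto (fun θ => sin (n * θ) * log (1 - cos θ)) (𝓝[<] π) (𝓝 0) := by
    have hcont : ContinuousAt (fun θ => sin (n * θ) * log (1 - cos θ)) π :=
      (by fun_prop : Continuous fun θ => sin (n * θ)).continuousAt.mul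
        ((continuous_const.sub continuous_cos).continuousAt.log (by norm_num))
    simpa [sin_nat_mul_pi] using hcont.tendsto.mono_left nhdsWithin_le_nhds
  have hFTC := integral_eq_sub_of_hasDerivAt_of_tendsto pi_pos hderiv
    ((hint.const_mul _).add (intervalIntegrable_sinMulCotHalf n))
    (tendsto_sin_nat_mul_mul_log_one_sub_cos n) hπ
  rw [integral_add (hint.const_mul _) (intervalIntegrable_sinMulCotHalf n),
    intervalIntegral.integral_const_mul, integral_sinMulCotHalf hn, sub_zero] at hFTC
  field_simp
  linarith

theorem integral_cos_nat_mul_mul_log_one_sub_cos {n : ℕ} (hn : n ≠ 0) :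
    ∫ θ in -π..π, cos (n * θ) * log (1 - cos θ) = -(2 * π) / n := by
  rw [integral_neg_self_eq_two_smul_of_even (fun θ => by simp only [mul_neg, cos_neg])
    (intervalIntegrable_mul_log_one_sub_cos (by fun_prop) 0 π),
    integral_cos_nat_mul_mul_log_one_sub_cos_zero_pi hn, smul_eq_mul]
  ring

/-- The key Fourier-multiplier integral for the radially homogeneous SQG equation:
for every integer `m ≥ 2`, the function `θ ↦ 3 cos(mθ) cos(θ) ln(1 − cos θ)` is
integrable on `[−π, π]` and
`∫_{−π}^{π} 3 cos(mθ) cos(θ) ln(1 − cos θ) dθ = −6πm/(m² − 1)`. -/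
theorem sqg_log_integral (m : ℕ) (hm : 2 ≤ m) :
    IntervalIntegrable
      (fun θ : ℝ => 3 * Real.cos (m * θ) * Real.cos θ * Real.log (1 - Real.cos θ))
      volume (-Real.pi) Real.pi ∧
    (∫ θ in (-Real.pi)..Real.pi,
        3 * Real.cos (m * θ) * Real.cos θ * Real.log (1 - Real.cos θ)) =
      -(6 * Real.pi * m) / (m ^ 2 - 1) := by
  refine ⟨intervalIntegrable_mul_log_one_sub_cos (by fun_prop) _ _, ?_⟩
  have hm1 : ((m - 1 : ℕ) : ℝ) = m - 1 := by rw [Nat.cast_sub (by omega), Nat.cast_one]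
  have hproduct (θ : ℝ) : 3 * cos (m * θ) * cos θ * log (1 - cos θ) =
      3 / 2 * (cos ((m + 1 : ℕ) * θ) * log (1 - cos θ)) +
        3 / 2 * (cos ((m - 1 : ℕ) * θ) * log (1 - cos θ)) := by
    rw [hm1, Nat.cast_succ, add_mul, sub_mul, one_mul, cos_add, cos_sub]
    ring
  simp_rw [hproduct]
  rw [integral_add ((intervalIntegrable_mul_log_one_sub_cos (by fun_prop) _ _).const_mul _)
      ((intervalIntegrable_mul_log_one_sub_cos (by fun_prop) _ _).const_mul _),
    intervalIntegral.integral_const_mul, intervalIntegral.integral_const_mul,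
    integral_cos_nat_mul_mul_log_one_sub_cos (by omega),
    integral_cos_nat_mul_mul_log_one_sub_cos (by omega), hm1]
  have hm' : (2 : ℝ) ≤ m := by exact_mod_cast hm
  have hm_sub_one : (m : ℝ) - 1 ≠ 0 := by linarith
  have hm_sq_sub_one : (m : ℝ) ^ 2 - 1 ≠ 0 := by nlinarith
  field_simp
  push_cast
  ring
end
end
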